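/- Closed form of the ADMM β-update for free coordinates, small-input regime: let λ0 ≥ 0, λ2 > 0, M > 0, ρ > 0 with √(λ0/λ2) ≤ M, and let t ∈ ℝ satisfy |t| ≤ 2√(λ0λ2)/ρ + √(λ0/λ2). Then the minimum of β ↦ (ρ/2)(β − t)² + ψ(β) over β ∈ [−M, M] is attained at β* = T(t; 2√(λ0λ2)/ρ, M). -/
import Mathlib


/-- The box-constrained soft-thresholding operator `T(t; a, m)`. -/
noncomputable def softT (t a m : ℝ) : ℝ :=
  if |t| ≤ a then 0
  else if |t| ≤ a + m then (|t| - a) * Real.sign t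
  else m * Real.sign t

/-- The penalty `ψ` for a free coordinate in the regime `√(λ0/λ2) ≤ M`. -/
noncomputable def psiFree (lam0 lam2 : ℝ) (t : ℝ) : ℝ :=
  if |t| ≤ Real.sqrt (lam0 / lam2) then 2 * Real.sqrt (lam0 * lam2) * |t|
  else lam0 + lam2 * t ^ 2

/-- Closed form of the ADMM `β`-update for free coordinates, small-input regime: if
`√(λ0/λ2) ≤ M` and `|t| ≤ 2√(λ0λ2)/ρ + √(λ0/λ2)`, then the minimum of
`β ↦ (ρ/2)(β − t)² + ψ(β)` over `β ∈ [−M, M]` is attained at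
`β* = T(t; 2√(λ0λ2)/ρ, M)`. -/
theorem admm_beta_update_free_small (lam0 lam2 M ρ t : ℝ) (hlam0 : 0 ≤ lam0)
    (hlam2 : 0 < lam2) (hM : 0 < M) (hρ : 0 < ρ)
    (hMcond : Real.sqrt (lam0 / lam2) ≤ M)
    (ht : |t| ≤ 2 * Real.sqrt (lam0 * lam2) / ρ + Real.sqrt (lam0 / lam2)) :
    softT t (2 * Real.sqrt (lam0 * lam2) / ρ) M ∈ Set.Icc (-M) M ∧
    ∀ β ∈ Set.Icc (-M) M,
      (ρ / 2) * (softT t (2 * Real.sqrt (lam0 * lam2) / ρ) M - t) ^ 2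
          + psiFree lam0 lam2 (softT t (2 * Real.sqrt (lam0 * lam2) / ρ) M)
        ≤ (ρ / 2) * (β - t) ^ 2 + psiFree lam0 lam2 β := by
  set c := Real.sqrt (lam0 * lam2) with hc_def
  set r := Real.sqrt (lam0 / lam2) with hr_def
  have hc : 0 ≤ c := Real.sqrt_nonneg _
  have hr0 : 0 ≤ r := Real.sqrt_nonneg _
  set a := 2 * c / ρ with ha_def
  have ha : 0 ≤ a := by positivity
  have h2c : 2 * c = ρ * a := by rw [ha_def]; field_simp
  have psi_eq : ∀ β : ℝ, |β| ≤ r → psiFree lam0 lam2 β = 2 * c * |β| := by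
    intro β hb
    rw [psiFree, ← hr_def, ← hc_def, if_pos hb]
  have psi_ge : ∀ β : ℝ, 2 * c * |β| ≤ psiFree lam0 lam2 β := by
    intro β
    rw [psiFree, ← hr_def, ← hc_def]
    split_ifs with h
    · exact le_rfl
    · have hcsep : c = Real.sqrt lam0 * Real.sqrt lam2 := by
        rw [hc_def]; exact Real.sqrt_mul hlam0 lam2
      nlinarith [sq_nonneg (Real.sqrt lam0 - Real.sqrt lam2 * |β|),
        Real.sq_sqrt hlam0, Real.sq_sqrt hlam2.le, sq_abs β]
  by_cases hta : |t| ≤ a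
  · have hsT : softT t a M = 0 := by rw [softT, if_pos hta]
    rw [hsT]
    have h0 : psiFree lam0 lam2 0 = 0 := by
      rw [psi_eq 0 (by simpa using hr0)]; simp
    refine ⟨⟨by linarith, by linarith⟩, ?_⟩
    intro β hβ
    have hge := psi_ge β
    have h1 : t * β ≤ a * |β| := by
      calc t * β ≤ |t * β| := le_abs_self _
        _ = |t| * |β| := abs_mul t β
        _ ≤ a * |β| := mul_le_mul_of_nonneg_right hta (abs_nonneg β)
    have h3 : ρ * (t * β) ≤ ρ * (a * |β|) := mul_le_mul_of_nonneg_left h1 hρ.le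
    rw [h0]
    rw [h2c] at hge
    nlinarith [hge, h3, mul_nonneg hρ.le (sq_nonneg β)]
  · push_neg at hta
    have htpos0 : 0 < |t| := lt_of_le_of_lt ha hta
    have htne : t ≠ 0 := abs_pos.mp htpos0
    have htM : |t| ≤ a + M := le_trans ht (by linarith)
    have hsT : softT t a M = (|t| - a) * Real.sign t := by
      rw [softT, if_neg (not_le.mpr hta), if_pos htM]
    rcases htne.lt_or_gt with htneg | htpos
    · -- t < 0
      have hsgn : Real.sign t = -1 := Real.sign_of_neg htneg
      have habs : |t| = -t := abs_of_neg htneg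
      have hB : softT t a M = t + a := by rw [hsT, hsgn, habs]; ring
      rw [hB]
      have h1 : t + a ≤ 0 := by
        have := hta; rw [habs] at this; linarith
      have h2 : -(t + a) ≤ r := by
        have := ht; rw [habs] at this; linarith
      have hpe : psiFree lam0 lam2 (t + a) = 2 * c * (-(t + a)) := by
        rw [psi_eq _ (by rw [abs_of_nonpos h1]; exact h2), abs_of_nonpos h1]
      refine ⟨⟨by linarith, by linarith⟩, ?_⟩
      intro β hβ
      have hge := psi_ge β
      have h3 : ρ * a * (-β) ≤ ρ * a * |β| :=
        mul_le_mul_of_nonneg_left (neg_le_abs β) (by positivity)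
      rw [hpe, h2c]
      rw [h2c] at hge
      nlinarith [hge, h3, mul_nonneg hρ.le (sq_nonneg (β - t - a))]
    · -- 0 < t
      have hsgn : Real.sign t = 1 := Real.sign_of_pos htpos
      have habs : |t| = t := abs_of_pos htpos
      have hB : softT t a M = t - a := by rw [hsT, hsgn, habs]; ring
      rw [hB]
      have h1 : 0 ≤ t - a := by
        have := hta; rw [habs] at this; linarith
      have h2 : t - a ≤ r := by
        have := ht; rw [habs] at this; linarith
      have hpe : psiFree lam0 lam2 (t - a) = 2 * c * (t - a) := by
        rw [psi_eq _ (by rw [abs_of_nonneg h1]; exact h2), abs_of_nonneg h1]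
      refine ⟨⟨by linarith, by linarith⟩, ?_⟩
      intro β hβ
      have hge := psi_ge β
      have h3 : ρ * a * β ≤ ρ * a * |β| :=
        mul_le_mul_of_nonneg_left (le_abs_self β) (by positivity)
      rw [hpe, h2c]
      rw [h2c] at hge
      nlinarith [hge, h3, mul_nonneg hρ.le (sq_nonneg (β - t + a))]
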